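/- (Quasi-periodicity of the elliptic rotator Lax matrix) Let N ≥ 2 and let S_{mn} ∈ ℂ be given for all (m,n) ∈ {0,…,N−1}² with (m,n) ≠ (0,0). For z ∉ ℤ+τℤ set L(z) = Σ_{(m,n)} S_{mn}·φ[m,n](z)·E_{mn}. Then for every z ∉ ℤ+τℤ: L(z+1) = Q·L(z)·Q^{−1} and L(z+τ) = Λ̃(z,τ)·L(z)·Λ̃(z,τ)^{−1}, where Λ̃(z,τ) = −e(−(z + τ/2)/N)·Λ. -/

import Mathlib

open scoped BigOperators

/-- `ee w = exp(2πi w)`. -/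
noncomputable def ee (w : ℂ) : ℂ := Complex.exp (2 * Real.pi * Complex.I * w)

/-- Theta function with characteristics `a b`:
`θ[a;b](z,τ) = Σ_{j∈ℤ} e((j+a)²·τ/2 + (j+a)·(z+b))`. -/
noncomputable def thetaChar (a b : ℝ) (z τ : ℂ) : ℂ :=
  ∑' j : ℤ, ee (((j : ℂ) + (a : ℂ)) ^ 2 * τ / 2 + ((j : ℂ) + (a : ℂ)) * (z + (b : ℂ)))

/-- The odd theta function `ϑ(z|τ) = θ[1/2;1/2](z,τ)`. -/
noncomputable def thetaO (τ z : ℂ) : ℂ := thetaChar (1/2) (1/2) z τ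

/-- The Eisenstein function `E₁(z) = ϑ'(z)/ϑ(z)`. -/
noncomputable def eisE1 (τ z : ℂ) : ℂ := deriv (thetaO τ) z / thetaO τ z

/-- The Eisenstein function `E₂(z) = −∂_z E₁(z)`. -/
noncomputable def eisE2 (τ z : ℂ) : ℂ := - deriv (eisE1 τ) z

/-- `φ(u,z) = ϑ(u+z)·ϑ'(0)/(ϑ(u)·ϑ(z))`. -/
noncomputable def phiF (τ u z : ℂ) : ℂ :=
  thetaO τ (u + z) * deriv (thetaO τ) 0 / (thetaO τ u * thetaO τ z)

/-- Membership in the lattice `ℤ + τℤ`. -/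
def InLattice (τ z : ℂ) : Prop := ∃ m n : ℤ, z = (m : ℂ) + (n : ℂ) * τ

/-- `Q = diag(e(1/N), e(2/N), …, e((N−1)/N), 1)`. -/
noncomputable def Qmat (N : ℕ) : Matrix (Fin N) (Fin N) ℂ :=
  Matrix.diagonal fun i => ee ((((i : ℕ) : ℂ) + 1) / N)

/-- The cyclic shift matrix `Λ`: `Λ_{i,i+1} = 1` for `1 ≤ i ≤ N−1`, `Λ_{N,1} = 1`. -/
noncomputable def LamMat (N : ℕ) : Matrix (Fin N) (Fin N) ℂ :=
  Matrix.of fun i j => if (j : ℕ) = ((i : ℕ) + 1) % N then 1 else 0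

/-- Integer powers of `Q`. -/
noncomputable def Qpow (N : ℕ) (m : ℤ) : Matrix (Fin N) (Fin N) ℂ :=
  Matrix.diagonal fun i => ee ((m : ℂ) * (((i : ℕ) : ℂ) + 1) / N)

/-- Integer powers of `Λ`. -/
noncomputable def Lampow (N : ℕ) (n : ℤ) : Matrix (Fin N) (Fin N) ℂ :=
  Matrix.of fun i j => if (((i : ℕ) : ℤ) + n) % N = ((j : ℕ) : ℤ) % N then 1 else 0

/-- The sin-algebra basis `E_{mn} = e(mn/(2N))·Q^m·Λ^n`. -/
noncomputable def Emat (N : ℕ) (m n : ℤ) : Matrix (Fin N) (Fin N) ℂ :=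
  ee ((m : ℂ) * (n : ℂ) / (2 * N)) • (Qpow N m * Lampow N n)

/-- `φ[m,n](z) = e(−nz/N)·φ(−(m+nτ)/N, z)`. -/
noncomputable def phiMN (N : ℕ) (τ : ℂ) (m n : ℤ) (z : ℂ) : ℂ :=
  ee (-(n : ℂ) * z / N) * phiF τ (-((m : ℂ) + (n : ℂ) * τ) / N) z

/-- The elliptic-rotator Lax matrix `L(z) = Σ_{(m,n)≠(0,0)} S_{mn}·φ[m,n](z)·E_{mn}`. -/
noncomputable def rotLax (N : ℕ) (τ : ℂ) (S : Fin N → Fin N → ℂ) (w : ℂ) :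
    Matrix (Fin N) (Fin N) ℂ :=
  ∑ p ∈ Finset.univ.filter
      (fun p : Fin N × Fin N => ¬ ((p.1 : ℕ) = 0 ∧ (p.2 : ℕ) = 0)),
    (S p.1 p.2 * phiMN N τ ((p.1 : ℕ) : ℤ) ((p.2 : ℕ) : ℤ) w)
      • Emat N ((p.1 : ℕ) : ℤ) ((p.2 : ℕ) : ℤ)

lemma ee_add (a b : ℂ) : ee (a + b) = ee a * ee b := by
  rw [ee, ee, ee, ← Complex.exp_add]; ring_nf

lemma ee_zero : ee 0 = 1 := by simp [ee]

lemma ee_ne (w : ℂ) : ee w ≠ 0 := Complex.exp_ne_zero _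

lemma ee_int (k : ℤ) : ee (k : ℂ) = 1 := by
  rw [ee, show (2 * (Real.pi:ℂ) * Complex.I * (k:ℂ)) = (k:ℤ) * (2 * Real.pi * Complex.I) by ring,
    Complex.exp_int_mul_two_pi_mul_I]

lemma ee_half : ee (1/2) = -1 := by
  rw [ee, show (2 * (Real.pi:ℂ) * Complex.I * (1/2)) = Real.pi * Complex.I by ring, Complex.exp_pi_mul_I]

lemma ee_neg_half : ee (-(1/2) : ℂ) = -1 := by
  have h : ee (-(1/2) : ℂ) * ee (1/2 : ℂ) = 1 := by rw [← ee_add]; norm_num [ee_zero]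
  rw [ee_half] at h; linear_combination -h

lemma half_cast : (((1/2 : ℝ)) : ℂ) = 1/2 := by norm_num

lemma thetaO_add_one (τ z : ℂ) : thetaO τ (z + 1) = - thetaO τ z := by
  unfold thetaO thetaChar
  rw [← tsum_neg]
  apply tsum_congr
  intro j
  rw [half_cast]
  rw [show ((j:ℂ) + 1/2) ^ 2 * τ / 2 + ((j:ℂ) + 1/2) * (z + 1 + 1/2)
      = (((j:ℂ) + 1/2) ^ 2 * τ / 2 + ((j:ℂ) + 1/2) * (z + 1/2)) + ((j:ℂ) + 1/2) by ring]
  rw [ee_add _ ((j:ℂ) + 1/2), ee_add (j:ℂ) (1/2), ee_int, ee_half]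
  ring

lemma thetaO_add_tau (τ z : ℂ) : thetaO τ (z + τ) = -(ee (-z - τ/2)) * thetaO τ z := by
  unfold thetaO thetaChar
  rw [half_cast]
  have key : ∀ j : ℤ, ee (((j:ℂ) + 1/2) ^ 2 * τ / 2 + ((j:ℂ) + 1/2) * (z + τ + 1/2))
      = -(ee (-z - τ/2)) * ee ((((j+1 : ℤ):ℂ) + 1/2) ^ 2 * τ / 2 + (((j+1 : ℤ):ℂ) + 1/2) * (z + 1/2)) := by
    intro j
    push_cast
    rw [show ((j:ℂ) + 1/2) ^ 2 * τ / 2 + ((j:ℂ) + 1/2) * (z + τ + 1/2)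
        = (-z - τ/2) + (-(1/2) + ((((j:ℂ)+1) + 1/2) ^ 2 * τ / 2 + (((j:ℂ)+1) + 1/2) * (z + 1/2))) by ring]
    rw [ee_add, ee_add, ee_neg_half]
    ring
  rw [tsum_congr key, tsum_mul_left]
  congr 1
  exact ((Equiv.addRight (1:ℤ)).tsum_eq (fun k : ℤ => ee (((k:ℂ) + 1/2) ^ 2 * τ / 2 + ((k:ℂ) + 1/2) * (z + 1/2))))

lemma phiF_add_one (τ u z : ℂ) : phiF τ u (z + 1) = phiF τ u z := by
  unfold phiF
  rw [show u + (z + 1) = (u + z) + 1 by ring, thetaO_add_one, thetaO_add_one]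
  rw [neg_mul, mul_neg, neg_div_neg_eq]

lemma phiF_add_tau (τ u z : ℂ) : phiF τ u (z + τ) = ee (-u) * phiF τ u z := by
  unfold phiF
  rw [show u + (z + τ) = (u + z) + τ by ring, thetaO_add_tau, thetaO_add_tau]
  have hc : -(ee (-z - τ/2)) ≠ 0 := neg_ne_zero.mpr (ee_ne _)
  have hee : ee (-(u+z) - τ/2) = ee (-u) * ee (-z - τ/2) := by
    rw [← ee_add]; congr 1; ring
  rw [hee]
  rw [show -(ee (-u) * ee (-z - τ/2)) * thetaO τ (u + z) * deriv (thetaO τ) 0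
      = (-(ee (-z - τ/2))) * (ee (-u) * (thetaO τ (u + z) * deriv (thetaO τ) 0)) by ring,
     show thetaO τ u * (-(ee (-z - τ/2)) * thetaO τ z)
      = (-(ee (-z - τ/2))) * (thetaO τ u * thetaO τ z) by ring,
     mul_div_mul_left _ _ hc, mul_div_assoc]

lemma phiMN_add_one (N : ℕ) (τ : ℂ) (m n : ℤ) (z : ℂ) :
    phiMN N τ m n (z + 1) = ee (-(n:ℂ)/N) * phiMN N τ m n z := by
  unfold phiMN
  rw [phiF_add_one, ← mul_assoc, ← ee_add]
  congr 2
  ring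

lemma phiMN_add_tau (N : ℕ) (τ : ℂ) (m n : ℤ) (z : ℂ) :
    phiMN N τ m n (z + τ) = ee ((m:ℂ)/N) * phiMN N τ m n z := by
  unfold phiMN
  rw [phiF_add_tau, ← mul_assoc, ← ee_add, ← mul_assoc, ← ee_add]
  congr 2
  ring

lemma Qmat_eq (N : ℕ) : Qmat N = Qpow N 1 := by
  unfold Qmat Qpow
  congr 1; funext i; norm_num

lemma Qpow_mul (N : ℕ) (a b : ℤ) : Qpow N a * Qpow N b = Qpow N (a + b) := by
  unfold Qpow
  rw [Matrix.diagonal_mul_diagonal]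
  have : (fun i : Fin N => ee ((a:ℂ) * (((i:ℕ):ℂ) + 1) / N) * ee ((b:ℂ) * (((i:ℕ):ℂ) + 1) / N))
      = fun i : Fin N => ee (((a+b : ℤ):ℂ) * (((i:ℕ):ℂ) + 1) / N) := by
    funext i; rw [← ee_add]; congr 1; push_cast; ring
  rw [this]

lemma Qpow_zero (N : ℕ) : Qpow N 0 = 1 := by
  unfold Qpow
  rw [show (Matrix.diagonal fun i : Fin N => ee ((((0:ℤ)):ℂ) * (((i : ℕ) : ℂ) + 1) / N))
      = Matrix.diagonal fun _ : Fin N => (1:ℂ) by congr 1; funext i; norm_num [ee_zero]]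
  exact Matrix.diagonal_one

lemma Lampow_zero (N : ℕ) (hN : 0 < N) : Lampow N 0 = 1 := by
  ext i j
  unfold Lampow
  rw [Matrix.of_apply, Matrix.one_apply]
  have hi : ((i : ℕ) : ℤ) % N = (i : ℕ) := Int.emod_eq_of_lt (by positivity) (by exact_mod_cast i.isLt)
  have hj : ((j : ℕ) : ℤ) % N = (j : ℕ) := Int.emod_eq_of_lt (by positivity) (by exact_mod_cast j.isLt)
  rw [add_zero, hi, hj]
  congr 1
  simp [Fin.ext_iff]

lemma Lampow_mul (N : ℕ) (hN : 0 < N) (a b : ℤ) :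
    Lampow N a * Lampow N b = Lampow N (a + b) := by
  ext i j
  unfold Lampow
  rw [Matrix.mul_apply]
  have h0 : (0:ℤ) ≤ (((i : ℕ) : ℤ) + a) % N := Int.emod_nonneg _ (by positivity)
  have h1 : (((i : ℕ) : ℤ) + a) % N < N := Int.emod_lt_of_pos _ (by exact_mod_cast hN)
  set k0 : Fin N := ⟨((((i : ℕ) : ℤ) + a) % N).toNat, by omega⟩ with hk0
  have hk0v : ((k0 : ℕ) : ℤ) = (((i : ℕ) : ℤ) + a) % N := by
    simp [hk0, Int.toNat_of_nonneg h0]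
  rw [Finset.sum_eq_single k0]
  · have hc : (((i : ℕ) : ℤ) + a) % N = ((k0 : ℕ) : ℤ) % N := by
      rw [hk0v, Int.emod_emod_of_dvd _ dvd_rfl]
    rw [Matrix.of_apply, Matrix.of_apply, Matrix.of_apply, if_pos hc, one_mul]
    congr 1
    · -- conditions are propositionally equal
      have : (((k0 : ℕ) : ℤ) + b) % N = (((i : ℕ) : ℤ) + (a + b)) % N := by
        rw [hk0v]
        conv_rhs => rw [show ((i : ℕ) : ℤ) + (a + b) = (((i : ℕ) : ℤ) + a) + b by ring]
        rw [Int.add_emod ((((i : ℕ) : ℤ)) + a) b, Int.add_emod (((((i : ℕ) : ℤ)) + a) % N) b,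
          Int.emod_emod_of_dvd _ dvd_rfl]
      rw [this]
  · intro k _ hk
    rw [Matrix.of_apply, Matrix.of_apply, if_neg, zero_mul]
    intro hc
    apply hk
    have hkv : ((k : ℕ) : ℤ) % N = ((k : ℕ) : ℤ) :=
      Int.emod_eq_of_lt (by positivity) (by exact_mod_cast k.isLt)
    rw [hkv] at hc
    have : ((k : ℕ) : ℤ) = ((k0 : ℕ) : ℤ) := by rw [hk0v, ← hc]
    exact Fin.ext (by exact_mod_cast this)
  · intro h; exact absurd (Finset.mem_univ k0) h

lemma Lampow_mul_Qpow (N : ℕ) (hN : 0 < N) (m n : ℤ) :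
    Lampow N n * Qpow N m = ee ((m:ℂ) * (n:ℂ) / N) • (Qpow N m * Lampow N n) := by
  have hNC : (N : ℂ) ≠ 0 := by exact_mod_cast hN.ne'
  ext i j
  rw [Qpow, Matrix.mul_diagonal, Matrix.smul_apply, Matrix.diagonal_mul, smul_eq_mul]
  unfold Lampow
  rw [Matrix.of_apply]
  by_cases h : (((i : ℕ) : ℤ) + n) % N = ((j : ℕ) : ℤ) % N
  · rw [if_pos h, one_mul, mul_one]
    -- N ∣ (i + n - j)
    have hd : (N : ℤ) ∣ (((i : ℕ) : ℤ) + n) - ((j : ℕ) : ℤ) := Int.ModEq.dvd (Int.ModEq.symm h)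
    obtain ⟨k, hk⟩ := hd
    have hj : ((j : ℕ) : ℂ) = ((i : ℕ) : ℂ) + (n : ℂ) - (N : ℂ) * (k : ℂ) := by
      have : ((j : ℕ) : ℤ) = (((i : ℕ) : ℤ) + n) - N * k := by omega
      exact_mod_cast congrArg (Int.cast : ℤ → ℂ) this
    rw [show (m : ℂ) * (((j : ℕ) : ℂ) + 1) / N
        = ((m:ℂ) * (n:ℂ) / N + (m:ℂ) * (((i : ℕ) : ℂ) + 1) / N) + ((-(m * k) : ℤ) : ℂ) by
      push_cast; rw [hj]; field_simp; ring]
    rw [ee_add, ee_int, mul_one, ee_add]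
  · rw [if_neg h, zero_mul, mul_zero, mul_zero]

lemma Qmul_E (N : ℕ) (hN : 0 < N) (m n : ℤ) :
    Qmat N * Emat N m n = ee (-(n:ℂ)/N) • (Emat N m n * Qmat N) := by
  rw [Qmat_eq]
  unfold Emat
  rw [Matrix.mul_smul, Matrix.smul_mul, ← mul_assoc, Qpow_mul, smul_smul, mul_assoc,
    Lampow_mul_Qpow N hN 1 n, Matrix.mul_smul, smul_smul]
  rw [← mul_assoc (Qpow N m), Qpow_mul, show m + 1 = 1 + m by ring]
  congr 1
  have hs : ee (-(n:ℂ)/N) * ee (((1:ℤ):ℂ) * (n:ℂ)/N) = 1 := by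
    rw [← ee_add, show -(n:ℂ)/N + ((1:ℤ):ℂ)*(n:ℂ)/N = 0 by push_cast; ring, ee_zero]
  linear_combination (-ee ((m:ℂ) * (n:ℂ) / (2 * N))) * hs

lemma LamMat_eq (N : ℕ) (hN : 0 < N) : LamMat N = Lampow N 1 := by
  ext i j
  unfold LamMat Lampow
  rw [Matrix.of_apply, Matrix.of_apply]
  have hj : ((j : ℕ) : ℤ) % N = (j : ℕ) := Int.emod_eq_of_lt (by positivity) (by exact_mod_cast j.isLt)
  have hmod : (((i : ℕ) : ℤ) + 1) % N = ((((i : ℕ) + 1) % N : ℕ) : ℤ) := by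
    push_cast
    rfl
  simp only [hj, hmod, Int.natCast_inj]
  simp [eq_comm]

lemma Lmul_E (N : ℕ) (hN : 0 < N) (m n : ℤ) :
    LamMat N * Emat N m n = ee ((m:ℂ)/N) • (Emat N m n * LamMat N) := by
  rw [LamMat_eq N hN]
  unfold Emat
  rw [Matrix.mul_smul, Matrix.smul_mul, ← mul_assoc, Lampow_mul_Qpow N hN m 1,
    Matrix.smul_mul, smul_smul, mul_assoc, Lampow_mul N hN 1 n, smul_smul,
    mul_assoc, Lampow_mul N hN n 1]
  rw [show (1:ℤ) + n = n + 1 by ring]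
  congr 1
  rw [← ee_add, ← ee_add]
  congr 1
  push_cast
  ring

theorem rotLax_quasi_periodicity (N : ℕ) (hN : 2 ≤ N) (τ : ℂ) (hτ : 0 < τ.im)
    (S : Fin N → Fin N → ℂ) (z : ℂ) (hz : ¬ InLattice τ z) :
    rotLax N τ S (z + 1) = Qmat N * rotLax N τ S z * (Qmat N)⁻¹ ∧
    rotLax N τ S (z + τ)
      = ((-(ee (-(z + τ / 2) / N))) • LamMat N) * rotLax N τ S z
          * ((-(ee (-(z + τ / 2) / N))) • LamMat N)⁻¹ := by
  have hN0 : 0 < N := by omega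
  constructor
  · have h1 : rotLax N τ S (z+1) * Qmat N = Qmat N * rotLax N τ S z := by
      unfold rotLax
      rw [Finset.sum_mul, Finset.mul_sum]
      refine Finset.sum_congr rfl (fun p _ => ?_)
      rw [phiMN_add_one, Matrix.smul_mul, Matrix.mul_smul, Qmul_E N hN0, smul_smul]
      congr 1
      ring
    have hQ1 : Qmat N * Qpow N (-1) = 1 := by
      rw [Qmat_eq, Qpow_mul, show (1:ℤ) + -1 = 0 by ring, Qpow_zero]
    have hiv : (Qmat N)⁻¹ = Qpow N (-1) := Matrix.inv_eq_right_inv hQ1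
    rw [← h1, mul_assoc, hiv, hQ1, mul_one]
  · set c : ℂ := -(ee (-(z + τ / 2) / N)) with hc
    have hcne : c ≠ 0 := neg_ne_zero.mpr (ee_ne _)
    have h2 : rotLax N τ S (z+τ) * (c • LamMat N) = (c • LamMat N) * rotLax N τ S z := by
      unfold rotLax
      rw [Finset.sum_mul, Finset.mul_sum]
      refine Finset.sum_congr rfl (fun p _ => ?_)
      rw [phiMN_add_tau, Matrix.mul_smul, Matrix.smul_mul, Matrix.mul_smul, Matrix.smul_mul,
        Lmul_E N hN0, smul_smul, smul_smul, smul_smul]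
      congr 1
      ring
    have hL1 : (c • LamMat N) * (c⁻¹ • Lampow N (-1)) = 1 := by
      rw [Matrix.smul_mul, Matrix.mul_smul, smul_smul, mul_inv_cancel₀ hcne,
        LamMat_eq N hN0, Lampow_mul N hN0, show (1:ℤ) + -1 = 0 by ring, Lampow_zero N hN0,
        one_smul]
    have hiv : ((c • LamMat N : Matrix (Fin N) (Fin N) ℂ))⁻¹ = c⁻¹ • Lampow N (-1) :=
      Matrix.inv_eq_right_inv hL1
    rw [← h2, mul_assoc, hiv, hL1, mul_one]
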